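/- Let {D_{i,j}}, indexed by the 2-subsets {i,j} of [n], be a family of positive real numbers satisfying the triangle inequalities (D_{i,j} ≤ D_{i,k} + D_{k,j} for all distinct i,j,k). Then {D_{i,j}} is p-treelike if and only if, for all distinct i,j,k,h ∈ [n], the maximum of {D_{i,j}+D_{k,h}, D_{i,k}+D_{j,h}, D_{i,h}+D_{k,j}} is attained at least twice. -/

import Mathlib

open scoped Classical
open Finset

noncomputable section

/-- The total weight of the minimal subtree of a tree `G` spanning the vertex set `A`:
the sum of the weights of those edges of `G` that lie on every walk between some pair
of vertices of `A` (in a tree, these are exactly the edges of the minimal subtree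
containing `A`). -/
def treeWeight {V : Type} [Fintype V] (G : SimpleGraph V) (w : Sym2 V → ℝ)
    (A : Finset V) : ℝ :=
  ∑ e ∈ (Finset.univ : Finset (Sym2 V)),
    if e ∈ G.edgeSet ∧ ∃ a ∈ A, ∃ b ∈ A, ∀ p : G.Walk a b, e ∈ p.edges then w e else 0

/-- A weighted finite tree whose set of leaves is (the image of) `α`. -/
structure WTree (α : Type) [Fintype α] : Type 1 where
  V : Type
  fintypeV : Fintype V
  G : SimpleGraph V
  isTree : G.IsTree
  w : Sym2 V → ℝ
  label : α → V
  label_inj : Function.Injective label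
  leaf_iff : ∀ v : V, (G.neighborSet v).ncard = 1 ↔ v ∈ Set.range label

attribute [instance] WTree.fintypeV

namespace WTree

variable {α : Type} [Fintype α]

/-- The `k`-weight `D_I` : the weight of the minimal subtree containing the leaves
labelled by `I`. -/
def D (T : WTree α) (I : Finset α) : ℝ := treeWeight T.G T.w (I.image T.label)

/-- A node is a vertex of degree `> 2`. -/
def IsNode (T : WTree α) (v : T.V) : Prop := 2 < (T.G.neighborSet v).ncard

/-- Two vertices are neighbours if the path between them contains exactly one node. -/
def Neighbours (T : WTree α) (a b : T.V) : Prop :=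
  a ≠ b ∧ ∃ p : T.G.Walk a b, p.IsPath ∧
    (p.support.toFinset.filter (fun v => T.IsNode v)).card = 1

/-- Two leaves (given by their labels) are neighbours. -/
def LeafNbr (T : WTree α) (i j : α) : Prop := T.Neighbours (T.label i) (T.label j)

/-- A set of leaves is a cherry if any two of its elements are neighbours. -/
def IsCherry (T : WTree α) (C : Finset α) : Prop :=
  ∀ i ∈ C, ∀ j ∈ C, i ≠ j → T.LeafNbr i j

/-- A cherry is complete if it is not strictly contained in another cherry. -/
def IsCompleteCherry (T : WTree α) (C : Finset α) : Prop :=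
  T.IsCherry C ∧ ∀ C' : Finset α, T.IsCherry C' → ¬ C ⊂ C'

/-- Buneman's index `⟨i,j|l,m⟩` : in the subtree spanned by the four leaves, `i,j` are
neighbours, `l,m` are neighbours and `i,l` are not neighbours; equivalently, the path
from `i` to `j` is disjoint from the path from `l` to `m`. -/
def Buneman (T : WTree α) (i j l m : α) : Prop :=
  i ≠ j ∧ l ≠ m ∧
  ∃ (p : T.G.Walk (T.label i) (T.label j)) (q : T.G.Walk (T.label l) (T.label m)),
    p.IsPath ∧ q.IsPath ∧ ∀ v, v ∈ p.support → v ∉ q.support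

/-- The edge `e` lies on the (unique) path between `a` and `b`. -/
def edgeBetween (T : WTree α) (a b : T.V) (e : Sym2 T.V) : Prop :=
  ∀ p : T.G.Walk a b, e ∈ p.edges

/-- The set of leaf labels lying on the `u`-side of the edge `{u,v}`. -/
def sideLeaves (T : WTree α) (u v : T.V) : Finset α :=
  Finset.univ.filter fun i => T.edgeBetween (T.label i) v s(u, v)

/-- A pseudostar of kind `(n,k)` (with `n = #α`): every edge divides the set of leaves
into two sets such that at least one of them has cardinality `≥ k`. -/
def IsPseudostar (T : WTree α) (k : ℕ) : Prop :=
  ∀ u v : T.V, T.G.Adj u v →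
    k ≤ (T.sideLeaves u v).card ∨ k ≤ (T.sideLeaves v u).card

/-- A tree is essential if it has no vertices of degree 2. -/
def IsEssential (T : WTree α) : Prop := ∀ v : T.V, (T.G.neighborSet v).ncard ≠ 2

/-- The edge `e` lies on the twig of the leaf labelled `i`, i.e. on the path from that
leaf to the nearest node (equivalently, on the path from the leaf to every node). -/
def OnTwig (T : WTree α) (i : α) (e : Sym2 T.V) : Prop :=
  ∀ w : T.V, T.IsNode w → T.edgeBetween (T.label i) w e

/-- An edge is internal if it is an edge of the tree lying on no twig. -/
def IsInternalEdge (T : WTree α) (e : Sym2 T.V) : Prop :=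
  e ∈ T.G.edgeSet ∧ ∀ i : α, ¬ T.OnTwig i e

/-- All internal edges have nonzero weight. -/
def InternalNonzero (T : WTree α) : Prop := ∀ e, T.IsInternalEdge e → T.w e ≠ 0

/-- All edges have positive weight. -/
def PositiveWeighted (T : WTree α) : Prop := ∀ e ∈ T.G.edgeSet, 0 < T.w e

/-- All weights are nonnegative and all internal edges have positive weight. -/
def NNIPWeighted (T : WTree α) : Prop :=
  (∀ e ∈ T.G.edgeSet, 0 ≤ T.w e) ∧ ∀ e, T.IsInternalEdge e → 0 < T.w e

/-- The edge `e` belongs to the minimal subtree containing the leaves labelled by `I`. -/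
def inMinSubtree (T : WTree α) (I : Finset α) (e : Sym2 T.V) : Prop :=
  e ∈ T.G.edgeSet ∧ ∃ a ∈ I, ∃ b ∈ I, T.edgeBetween (T.label a) (T.label b) e

end WTree

/-- Isomorphism of weighted trees fixing the labelled leaves. -/
def WIso {α : Type} [Fintype α] (T T' : WTree α) : Prop :=
  ∃ φ : T.V ≃ T'.V,
    (∀ a b : T.V, T.G.Adj a b ↔ T'.G.Adj (φ a) (φ b)) ∧
    (∀ a b : T.V, T.G.Adj a b → T.w s(a, b) = T'.w s(φ a, φ b)) ∧
    ∀ i : α, φ (T.label i) = T'.label i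

/-- A family indexed by the `k`-subsets of `α` is l-treelike if it is realized by a
weighted tree with leaf set `α`. -/
def IsLTreelike (α : Type) [Fintype α] (k : ℕ) (D : Finset α → ℝ) : Prop :=
  ∃ T : WTree α, ∀ I : Finset α, I.card = k → T.D I = D I

/-- p-l-treelike : realized by a positive-weighted tree with leaf set `α`. -/
def IsPLTreelike (α : Type) [Fintype α] (k : ℕ) (D : Finset α → ℝ) : Prop :=
  ∃ T : WTree α, T.PositiveWeighted ∧ ∀ I : Finset α, I.card = k → T.D I = D I

/-- nn-ip-l-treelike : realized by a nonnegative-weighted, internal-positive-weighted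
tree with leaf set `α`. -/
def IsNNIPLTreelike (α : Type) [Fintype α] (k : ℕ) (D : Finset α → ℝ) : Prop :=
  ∃ T : WTree α, T.NNIPWeighted ∧ ∀ I : Finset α, I.card = k → T.D I = D I

/-- p-treelike : realized on a subset of the vertices of a positive-weighted tree. -/
def IsPTreelike (n k : ℕ) (D : Finset (Fin n) → ℝ) : Prop :=
  ∃ (V : Type) (_ : Fintype V) (G : SimpleGraph V) (w : Sym2 V → ℝ) (f : Fin n → V),
    G.IsTree ∧ Function.Injective f ∧ (∀ e ∈ G.edgeSet, 0 < w e) ∧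
    ∀ I : Finset (Fin n), I.card = k → treeWeight G w (I.image f) = D I


/-- A hierarchy: a set system in which any two members intersect in `∅` or in one
of the two. -/
def IsHierarchy {β : Type} (ℋ : Set (Finset β)) : Prop :=
  ∀ H ∈ ℋ, ∀ H' ∈ ℋ, H ∩ H' = ∅ ∨ H ∩ H' = H ∨ H ∩ H' = H'

/-- The element `Σ_{H ∈ ℋ, H ∩ A ≠ ∅, H ⊉ A} H` of the free ℤ-module on the clusters. -/
def hsum {β : Type} (ℋ : Set (Finset β)) (A : Finset β) : Finset β →₀ ℤ :=
  ∑ᶠ H ∈ {H : Finset β | H ∈ ℋ ∧ (H ∩ A).Nonempty ∧ ¬ A ⊆ H}, Finsupp.single H 1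

/-- `m` is a minimal cluster of `ℋ` containing `t`. -/
def IsMinCluster {β : Type} (ℋ : Set (Finset β)) (t : β) (m : Finset β) : Prop :=
  m ∈ ℋ ∧ t ∈ m ∧ ∀ H ∈ ℋ, t ∈ H → ¬ H ⊂ m

/-- `M` is a maximal cluster of `ℋ` containing `t`. -/
def IsMaxCluster {β : Type} (ℋ : Set (Finset β)) (t : β) (M : Finset β) : Prop :=
  M ∈ ℋ ∧ t ∈ M ∧ ∀ H ∈ ℋ, t ∈ H → ¬ M ⊂ H

/-- `M` is a maximal cluster of `ℋ` containing the cluster `J`. -/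
def IsMaxClusterContaining {β : Type} (ℋ : Set (Finset β)) (J M : Finset β) : Prop :=
  M ∈ ℋ ∧ J ⊆ M ∧ ∀ H ∈ ℋ, J ⊆ H → ¬ M ⊂ H

section FamHierarchy

variable (n k : ℕ) (D : Finset (Fin n) → ℝ)

/-- `𝒞⁰` : the sets `Z` of cardinality `≥ 2` such that for all `i,j ∈ Z` the quantity
`D_{i,X} - D_{j,X}` does not depend on `X ∈ ([n] - {i,j} choose k-1)`. -/
def famC0 : Set (Finset (Fin n)) :=
  {Z | 2 ≤ Z.card ∧ ∀ i ∈ Z, ∀ j ∈ Z, ∀ X X' : Finset (Fin n),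
    X.card = k - 1 → i ∉ X → j ∉ X → X'.card = k - 1 → i ∉ X' → j ∉ X' →
    D (insert i X) - D (insert j X) = D (insert i X') - D (insert j X')}

/-- `𝒞̲⁰` : the maximal elements of `𝒞⁰`. -/
def famMaxC0 : Set (Finset (Fin n)) :=
  {Z | Z ∈ famC0 n k D ∧ ∀ Z' ∈ famC0 n k D, ¬ Z ⊂ Z'}

/-- Condition (b) in the definition of `𝒢^s` : there are `R, S` in
`([n]-{i,j,x,y} choose k-2)` with `D_{ijR} + D_{xyR} ≠ D_{ixR} + D_{jyR}` and
`D_{ijS} + D_{xyS} ≠ D_{iyS} + D_{jxS}`. -/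
def famCondB (i j x y : Fin n) : Prop :=
  ∃ R S : Finset (Fin n),
    R.card = k - 2 ∧ i ∉ R ∧ j ∉ R ∧ x ∉ R ∧ y ∉ R ∧
    S.card = k - 2 ∧ i ∉ S ∧ j ∉ S ∧ x ∉ S ∧ y ∉ S ∧
    D (insert i (insert j R)) + D (insert x (insert y R)) ≠
      D (insert i (insert x R)) + D (insert j (insert y R)) ∧
    D (insert i (insert j S)) + D (insert x (insert y S)) ≠
      D (insert i (insert y S)) + D (insert j (insert x S))

/-- Condition (b) in the definition of `𝒞^s` (with the roles of the pairs permuted). -/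
def famCondB' (i j x y : Fin n) : Prop :=
  ∃ R S : Finset (Fin n),
    R.card = k - 2 ∧ i ∉ R ∧ j ∉ R ∧ x ∉ R ∧ y ∉ R ∧
    S.card = k - 2 ∧ i ∉ S ∧ j ∉ S ∧ x ∉ S ∧ y ∉ S ∧
    D (insert i (insert x R)) + D (insert j (insert y R)) ≠
      D (insert i (insert j R)) + D (insert x (insert y R)) ∧
    D (insert i (insert x S)) + D (insert j (insert y S)) ≠
      D (insert i (insert y S)) + D (insert j (insert x S))

/-- `𝒢⁰`. -/
def famG0 : Set (Finset (Fin n)) :=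
  {Z | Z ∈ famMaxC0 n k D ∧ Z.card ≤ n - k ∧
    ∀ i ∈ Z, ∀ j ∈ Z, ∀ x y : Fin n, x ∉ Z → y ∉ Z →
      (({i, j} : Finset (Fin n)) ∈ famMaxC0 n k D ∧
        ({x, y} : Finset (Fin n)) ∈ famMaxC0 n k D) ∨
      famCondB n k D i j x y}

/-- `𝒞^s`, relative to the surviving set `N = [n]^s`. -/
def famCs (N : Finset (Fin n)) : Set (Finset (Fin n)) :=
  {Z | Z ⊆ N ∧ 2 ≤ Z.card ∧ ∀ i ∈ Z, ∀ j ∈ Z, ∀ x y : Fin n,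
    x ∈ N → y ∈ N → x ≠ i → x ≠ j → y ≠ i → y ≠ j →
    ¬ (({i, x} : Finset (Fin n)) ∈ famMaxC0 n k D ∧
        ({j, y} : Finset (Fin n)) ∈ famMaxC0 n k D) ∧
    ¬ famCondB' n k D i j x y}

/-- `𝒞̲^s` : the maximal elements of `𝒞^s`. -/
def famMaxCs (N : Finset (Fin n)) : Set (Finset (Fin n)) :=
  {Z | Z ∈ famCs n k D N ∧ ∀ Z' ∈ famCs n k D N, ¬ Z ⊂ Z'}

/-- The chain relation expressing that `y0` descends from `y` through the history
`hs = [𝒢⁰, …, 𝒢^{s-1}]` of pruned families. -/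
def descChain : List (Set (Finset (Fin n))) → Fin n → Fin n → Prop
  | [], y0, y => y0 = y
  | G :: rest, y0, y =>
      ∃ y1 : Fin n, (y1 = y0 ∨ ∃ Z ∈ G, y0 ∈ Z ∧ y1 ∈ Z) ∧ descChain rest y1 y

/-- `∂Z` : the set of elements of `[n]` descending from an element of `Z`. -/
def bdry (hs : List (Set (Finset (Fin n)))) (Z : Finset (Fin n)) : Finset (Fin n) :=
  Finset.univ.filter fun y0 => ∃ ys ∈ Z, descChain n hs y0 ys

/-- `𝒢^s` (for `s ≥ 1`), relative to the surviving set `N = [n]^s` and the history `hs`. -/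
def famGs (N : Finset (Fin n)) (hs : List (Set (Finset (Fin n)))) :
    Set (Finset (Fin n)) :=
  {Z | Z ∈ famMaxCs n k D N ∧ (bdry n hs Z).card ≤ n - k ∧
    ∀ i ∈ Z, ∀ j ∈ Z, ∀ x y : Fin n, x ∉ Z → y ∉ Z →
      (({i, j} : Finset (Fin n)) ∈ famMaxC0 n k D ∧
        ({x, y} : Finset (Fin n)) ∈ famMaxC0 n k D) ∨
      famCondB n k D i j x y}

/-- The pair `([n]^s, [𝒢⁰, …, 𝒢^{s-1}])`. -/
def famStage : ℕ → Finset (Fin n) × List (Set (Finset (Fin n)))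
  | 0 => (Finset.univ, [])
  | s + 1 =>
      let p := famStage s
      let G := if s = 0 then famG0 n k D else famGs n k D p.1 p.2
      (p.1.filter fun y => ∀ Z ∈ G, y ∈ Z → ∀ z ∈ Z, y ≤ z, p.2 ++ [G])

/-- `𝒢^s`. -/
def famGAt (s : ℕ) : Set (Finset (Fin n)) :=
  if s = 0 then famG0 n k D
  else famGs n k D (famStage n k D s).1 (famStage n k D s).2

/-- The hierarchy over `[n]` associated to the family `{D_I}`. -/
def famHier : Set (Finset (Fin n)) :=
  {A | ∃ s : ℕ, ∃ Z ∈ famGAt n k D s, A = bdry n (famStage n k D s).2 Z}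

/-- Condition (i): if `ℋ` covers `[n]` then the number of maximal clusters is not 2. -/
def CondI {n : ℕ} (ℋ : Set (Finset (Fin n))) : Prop :=
  (∀ x : Fin n, ∃ H ∈ ℋ, x ∈ H) →
    {H | H ∈ ℋ ∧ ∀ H' ∈ ℋ, ¬ H ⊂ H'}.ncard ≠ 2

/-- Condition (ii): for `q ∈ {1,…,n-1}`, `s ∈ {1, k-1}`, `W, W' ∈ ([n] choose s)`,
the sum `Σ_i (D_{W Z_i} - D_{W' Z_i})` takes the same value on all choices of the
`Z_i ∈ ([n]-W-W' choose k-s)` on which the corresponding element of the free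
ℤ-module `⊕_{H ∈ ℋ} ℤ H` is the same. -/
def CondII (n k : ℕ) (D : Finset (Fin n) → ℝ) (ℋ : Set (Finset (Fin n))) : Prop :=
  ∀ q : ℕ, 1 ≤ q → q ≤ n - 1 → ∀ s : ℕ, s = 1 ∨ s = k - 1 →
    ∀ W W' : Finset (Fin n), W.card = s → W'.card = s →
    ∀ Z Z' : ℕ → Finset (Fin n),
      (∀ i < q, (Z i).card = k - s ∧ Disjoint (Z i) W ∧ Disjoint (Z i) W') →
      (∀ i < q, (Z' i).card = k - s ∧ Disjoint (Z' i) W ∧ Disjoint (Z' i) W') →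
      (∑ i ∈ Finset.range q, (hsum ℋ (W ∪ Z i) - hsum ℋ (W' ∪ Z i)) =
        ∑ i ∈ Finset.range q, (hsum ℋ (W ∪ Z' i) - hsum ℋ (W' ∪ Z' i))) →
      (∑ i ∈ Finset.range q, (D (W ∪ Z i) - D (W' ∪ Z i)) =
        ∑ i ∈ Finset.range q, (D (W ∪ Z' i) - D (W' ∪ Z' i)))

end FamHierarchy

section Pruning

namespace WTree

variable {α : Type} [Fintype α]

/-- The subtree of `T` induced on the vertex set `S` (as a graph on the ambient
vertex set). Pruning a cherry, i.e. contracting the twigs of its leaves, is realized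
by deleting the vertices of those twigs except the stalk. -/
def restrictG (T : WTree α) (S : Set T.V) : SimpleGraph T.V where
  Adj a b := T.G.Adj a b ∧ a ∈ S ∧ b ∈ S
  symm := ⟨fun _ _ h => ⟨h.1.symm, h.2.2, h.2.1⟩⟩
  loopless := ⟨fun _ h => T.G.irrefl h.1⟩

/-- Degree in the pruned tree. -/
def rdeg (T : WTree α) (S : Set T.V) (v : T.V) : ℕ :=
  ((T.restrictG S).neighborSet v).ncard

/-- Leaf of the pruned tree. -/
def rleaf (T : WTree α) (S : Set T.V) (v : T.V) : Prop := v ∈ S ∧ T.rdeg S v = 1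

/-- Node (vertex of degree `> 2`) of the pruned tree. -/
def rnode (T : WTree α) (S : Set T.V) (v : T.V) : Prop := v ∈ S ∧ 2 < T.rdeg S v

/-- Neighbours in the pruned tree: the path between them contains exactly one node. -/
def rnbr (T : WTree α) (S : Set T.V) (a b : T.V) : Prop :=
  a ≠ b ∧ ∃ p : (T.restrictG S).Walk a b, p.IsPath ∧
    (p.support.toFinset.filter (fun v => T.rnode S v)).card = 1

/-- Cherry of the pruned tree: a set of leaves any two of which are neighbours. -/
def rCherry (T : WTree α) (S : Set T.V) (C : Set T.V) : Prop :=
  (∀ v ∈ C, T.rleaf S v) ∧ ∀ a ∈ C, ∀ b ∈ C, a ≠ b → T.rnbr S a b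

/-- Complete cherry of the pruned tree. -/
def rCompleteCherry (T : WTree α) (S : Set T.V) (C : Set T.V) : Prop :=
  T.rCherry S C ∧ ∀ C' : Set T.V, T.rCherry S C' → ¬ C ⊂ C'

/-- The stalk of a cherry: the node lying on the path from any element of the cherry
to any node. -/
def rStalk (T : WTree α) (S : Set T.V) (C : Set T.V) (v : T.V) : Prop :=
  T.rnode S v ∧ ∀ a ∈ C, ∀ w : T.V, T.rnode S w →
    ∀ p : (T.restrictG S).Walk a w, p.IsPath → v ∈ p.support

/-- `v` is on the twig of the leaf `ℓ` in the pruned tree: `v` is not a node and lies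
on the path from `ℓ` to every node. -/
def rTwigVert (T : WTree α) (S : Set T.V) (ℓ v : T.V) : Prop :=
  v ∈ S ∧ ¬ T.rnode S v ∧ ∀ w : T.V, T.rnode S w →
    ∀ p : (T.restrictG S).Walk ℓ w, p.IsPath → v ∈ p.support

/-- The vertex set obtained by pruning the cherry `C` (contracting the twigs of its
leaves). -/
def pruneCherry (T : WTree α) (S : Set T.V) (C : Set T.V) : Set T.V :=
  S \ {v | ∃ ℓ ∈ C, T.rTwigVert S ℓ v}

/-- A good cherry: a complete cherry whose stalk is a leaf of the tree obtained by
pruning it. -/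
def rGoodCherry (T : WTree α) (S : Set T.V) (C : Set T.V) : Prop :=
  T.rCompleteCherry S C ∧ ∃ v : T.V, T.rStalk S C v ∧ T.rleaf (T.pruneCherry S C) v

/-- The leaf labelled `x` (of the original tree) descends from the leaf `y` of the
pruned tree: the path in the original tree from `x` to `y` contains no leaf of the
pruned tree other than `y`. -/
def descLeaf (T : WTree α) (S : Set T.V) (x : α) (y : T.V) : Prop :=
  T.rleaf S y ∧ ∀ p : T.G.Walk (T.label x) y, p.IsPath →
    ∀ v ∈ p.support, T.rleaf S v → v = y

/-- `∂C` : the set of labels descending from an element of `C`. -/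
def bdryV (T : WTree α) (S : Set T.V) (C : Set T.V) : Finset α :=
  Finset.univ.filter fun x => ∃ y ∈ C, T.descLeaf S x y

/-- One pruning step: prune all good cherries `C` with `#∂C ≤ r`. -/
def pruneStage (T : WTree α) (r : ℕ) (S : Set T.V) : Set T.V :=
  S \ {v | ∃ C : Set T.V, T.rGoodCherry S C ∧ (T.bdryV S C).card ≤ r ∧
    ∃ ℓ ∈ C, T.rTwigVert S ℓ v}

/-- The vertex set of `P^s`. -/
def stageSet (T : WTree α) (r : ℕ) : ℕ → Set T.V
  | 0 => Set.univ
  | s + 1 => T.pruneStage r (T.stageSet r s)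

/-- The hierarchy associated to the pseudostar `T` (with `r = n - k`): the sets `∂C`
for `C` a good cherry of some `P^s` with `#∂C ≤ r`; when `L(P^s)` is the union of two
complete cherries both with `#∂C_i ≤ r`, only the one whose `∂` contains the minimum
of `∂C₁ ∪ ∂C₂` is included. -/
def psHier [LinearOrder α] (T : WTree α) (r : ℕ) : Set (Finset α) :=
  {A | ∃ (s : ℕ) (C : Set T.V),
    T.rGoodCherry (T.stageSet r s) C ∧
    (T.bdryV (T.stageSet r s) C).card ≤ r ∧
    A = T.bdryV (T.stageSet r s) C ∧
    ∀ C₂ : Set T.V, T.rCompleteCherry (T.stageSet r s) C₂ →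
      (∀ v : T.V, T.rleaf (T.stageSet r s) v ↔ v ∈ C ∪ C₂) →
      (T.bdryV (T.stageSet r s) C₂).card ≤ r →
      ∃ m ∈ T.bdryV (T.stageSet r s) C,
        ∀ x ∈ T.bdryV (T.stageSet r s) C ∪ T.bdryV (T.stageSet r s) C₂, m ≤ x}

/-- The edge `e` belongs to the twig of the leaf `v` in the pruned tree on `S`. -/
def rOnTwigEdge (T : WTree α) (S : Set T.V) (v : T.V) (e : Sym2 T.V) : Prop :=
  e ∈ (T.restrictG S).edgeSet ∧ ∀ w : T.V, T.rnode S w →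
    ∀ p : (T.restrictG S).Walk v w, p.IsPath → e ∈ p.edges

end WTree

end Pruning

/-!
For `⇒`, root the tree at `h` and let `dep` be the weighted height. If `m_ab` is the deepest
common ancestor of `a` and `b`, then `D_ab = dep a + dep b - 2 dep m_ab`. Among the three ancestors
`m_ij, m_ik, m_jk` the two shallowest have the same depth, and that is the four-point condition.

For `⇐`, fix a base point `z`. The triangle inequality and the four-point condition say that
the Gromov products `g_ij = (D_zi + D_zj - D_ij) / 2` satisfy `min g_ij g_jk ≤ g_ik`. Such a `g`
is realized by a dendrogram. Branch `i` climbs from the root to height `g_ii`, and branches `i`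
and `j` are glued up to height `g_ij`. In this tree `g_ii + g_jj - 2 g_ij = D_ij` is the distance
between the leaves `i` and `j`.
-/

open SimpleGraph

def MaxAttainedTwice (x y z : ℝ) : Prop :=
  (x = y ∧ z ≤ x) ∨ (x = z ∧ y ≤ x) ∨ (y = z ∧ x ≤ y)

theorem maxAttainedTwice_iff {x y z : ℝ} :
    MaxAttainedTwice x y z ↔ x ≤ max y z ∧ y ≤ max x z ∧ z ≤ max x y := by
  unfold MaxAttainedTwice
  constructor
  · rintro (⟨rfl, h⟩ | ⟨rfl, h⟩ | ⟨rfl, h⟩) <;> simp [h]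
  · simp only [le_max_iff]
    rintro ⟨h₁ | h₁, h₂ | h₂, h₃ | h₃⟩ <;>
      first
      | exact .inl ⟨by linarith, by linarith⟩
      | exact .inr (.inl ⟨by linarith, by linarith⟩)
      | exact .inr (.inr ⟨by linarith, by linarith⟩)

variable {V : Type}

theorem treeWeight_pair_eq_sum_of_isPath [Fintype V] {G : SimpleGraph V} (hG : G.IsTree)
    (w : Sym2 V → ℝ) {u v : V} {p : G.Walk u v} (hp : p.IsPath) :
    treeWeight G w {u, v} = (p.edges.map w).sum := by
  have on_path : ∀ e, (e ∈ G.edgeSet ∧ ∃ a ∈ ({u, v} : Finset V), ∃ b ∈ ({u, v} : Finset V),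
      ∀ q : G.Walk a b, e ∈ q.edges) ↔ e ∈ p.edges := by
    refine fun e ↦ ⟨?_, fun he ↦ ⟨p.edges_subset_edgeSet he, u, by simp, v, by simp, fun q ↦ ?_⟩⟩
    · rintro ⟨-, a, ha, b, hb, hq⟩
      simp only [Finset.mem_insert, Finset.mem_singleton] at ha hb
      rcases ha with rfl | rfl <;> rcases hb with rfl | rfl
      · simpa using hq .nil
      · exact hq p
      · simpa using hq p.reverse
      · simpa using hq .nil
    · rw [(hG.existsUnique_path u v).unique hp q.bypass_isPath] at he
      exact q.edges_bypass_subset_edges he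
  rw [treeWeight, Finset.sum_congr rfl fun e _ ↦ if_congr (on_path e) rfl rfl, ← Finset.sum_filter,
    ← List.sum_toFinset _ hp.isTrail.edges_nodup]
  congr 1
  ext e
  simp

theorem treeWeight_pair_self [Fintype V] {G : SimpleGraph V} (hG : G.IsTree) (w : Sym2 V → ℝ)
    (v : V) : treeWeight G w {v, v} = 0 := by
  simpa using treeWeight_pair_eq_sum_of_isPath hG w (Walk.IsPath.nil (G := G) (u := v))

def IsAncestor (par : V → V) (u x : V) : Prop := ∃ k : ℕ, par^[k] u = x

namespace IsAncestor

variable {par : V → V}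

theorem refl (u : V) : IsAncestor par u u := ⟨0, rfl⟩

theorem par_self (u : V) : IsAncestor par u (par u) := ⟨1, rfl⟩

theorem trans {u x y : V} (hx : IsAncestor par u x) (hy : IsAncestor par x y) :
    IsAncestor par u y := by
  obtain ⟨k, rfl⟩ := hx
  obtain ⟨l, rfl⟩ := hy
  exact ⟨l + k, Function.iterate_add_apply par l k u⟩

theorem total {u x y : V} (hx : IsAncestor par u x) (hy : IsAncestor par u y) :
    IsAncestor par x y ∨ IsAncestor par y x := by
  obtain ⟨k, rfl⟩ := hx
  obtain ⟨l, rfl⟩ := hy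
  rcases le_total k l with h | h
  · exact .inl ⟨l - k, by rw [← Function.iterate_add_apply, Nat.sub_add_cancel h]⟩
  · exact .inr ⟨k - l, by rw [← Function.iterate_add_apply, Nat.sub_add_cancel h]⟩

end IsAncestor

def IsLCA (par : V → V) (dep : V → ℝ) (u v m : V) : Prop :=
  IsAncestor par u m ∧ IsAncestor par v m ∧
    ∀ x, IsAncestor par u x → IsAncestor par v x → dep x ≤ dep m

namespace IsLCA

variable {par : V → V} {dep : V → ℝ}

theorem symm {u v m : V} (h : IsLCA par dep u v m) : IsLCA par dep v u m :=
  ⟨h.2.1, h.1, fun x hv hu ↦ h.2.2 x hu hv⟩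

theorem min_dep_le {u v x a b c : V} (ha : IsLCA par dep u v a) (hb : IsLCA par dep v x b)
    (hc : IsLCA par dep u x c) : min (dep a) (dep b) ≤ dep c := by
  rcases ha.2.1.total hb.1 with h | h
  · exact (min_le_right _ _).trans (hc.2.2 b (ha.1.trans h) hb.2.1)
  · exact (min_le_left _ _).trans (hc.2.2 a ha.1 (hb.2.1.trans h))

end IsLCA

structure IsParentMap (par : V → V) (dep : V → ℝ) (root : V) : Prop where
  par_root : par root = root
  dep_par_lt : ∀ v, v ≠ root → dep (par v) < dep v

namespace IsParentMap

variable {par : V → V} {dep : V → ℝ} {root : V} (hP : IsParentMap par dep root)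
include hP

theorem dep_par_le (v : V) : dep (par v) ≤ dep v := by
  by_cases h : v = root
  · rw [h, hP.par_root]
  · exact (hP.dep_par_lt v h).le

theorem dep_le_of_isAncestor {u x : V} (h : IsAncestor par u x) : dep x ≤ dep u := by
  obtain ⟨k, rfl⟩ := h
  induction k with
  | zero => rfl
  | succ k ih => exact (Function.iterate_succ_apply' par k u ▸ hP.dep_par_le _).trans ih

theorem eq_of_isAncestor_of_dep_le {u x : V} (h : IsAncestor par u x) (hle : dep u ≤ dep x) :
    u = x := by
  obtain ⟨_ | k, rfl⟩ := h
  · rfl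
  by_cases hu : u = root
  · rw [hu, Function.iterate_fixed hP.par_root]
  · have := hP.dep_le_of_isAncestor (⟨k, (Function.iterate_succ_apply par k u).symm⟩ :
      IsAncestor par (par u) (par^[k + 1] u))
    linarith [hP.dep_par_lt u hu]

theorem isAncestor_root [Finite V] (v : V) : IsAncestor par v root := by
  have : IsTrans V (InvImage (· < ·) dep) := ⟨fun _ _ _ ↦ lt_trans⟩
  have : Std.Irrefl (InvImage (· < ·) dep) := ⟨fun _ ↦ lt_irrefl _⟩
  induction v using (Finite.wellFounded_of_trans_of_irrefl (InvImage (· < ·) dep)).induction with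
  | _ v ih =>
    by_cases hv : v = root
    · exact hv ▸ .refl v
    · exact (IsAncestor.par_self v).trans (ih _ (hP.dep_par_lt v hv))

theorem exists_isLCA [Finite V] (u v : V) : ∃ m, IsLCA par dep u v m := by
  have := Fintype.ofFinite V
  obtain ⟨m, hm, hmax⟩ := Finset.exists_max_image
    (Finset.univ.filter fun x ↦ IsAncestor par u x ∧ IsAncestor par v x) dep
    ⟨root, by simp [hP.isAncestor_root]⟩
  simp only [Finset.mem_filter, Finset.mem_univ, true_and] at hm hmax
  exact ⟨m, hm.1, hm.2, fun x hu hv ↦ hmax x ⟨hu, hv⟩⟩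

end IsParentMap

structure IsWeightedParentMap (G : SimpleGraph V) (w : Sym2 V → ℝ) (par : V → V) (dep : V → ℝ)
    (root : V) : Prop extends IsParentMap par dep root where
  adj_par : ∀ v, v ≠ root → G.Adj v (par v)
  weight_par : ∀ v, v ≠ root → w s(v, par v) = dep v - dep (par v)

namespace IsWeightedParentMap

variable {G : SimpleGraph V} {w : Sym2 V → ℝ} {par : V → V} {dep : V → ℝ} {root : V}

def walkUp (hR : IsWeightedParentMap G w par dep root) : (k : ℕ) → (v : V) → G.Walk v (par^[k] v)
  | 0, _ => .nil
  | k + 1, v =>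
    if h : v = root then
      Walk.nil.copy rfl (by rw [h, Function.iterate_fixed hR.par_root])
    else
      (Walk.cons (hR.adj_par v h) (hR.walkUp k (par v))).copy rfl
        (Function.iterate_succ_apply par k v).symm

variable (hR : IsWeightedParentMap G w par dep root)
include hR

theorem isAncestor_of_mem_support_walkUp {k : ℕ} {v x : V} (hx : x ∈ (hR.walkUp k v).support) :
    IsAncestor par v x ∧ IsAncestor par x (par^[k] v) := by
  induction k generalizing v with
  | zero =>
    obtain rfl : x = v := by simpa [walkUp] using hx
    exact ⟨.refl x, .refl x⟩
  | succ k ih =>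
    rw [walkUp] at hx
    split_ifs at hx with h
    · rw [Walk.support_copy] at hx
      obtain rfl : x = v := by simpa using hx
      exact ⟨.refl x, ⟨k + 1, rfl⟩⟩
    · simp only [Walk.support_copy, Walk.support_cons, List.mem_cons] at hx
      rcases hx with rfl | hx
      · exact ⟨.refl x, ⟨k + 1, rfl⟩⟩
      · obtain ⟨h₁, h₂⟩ := ih hx
        exact ⟨(IsAncestor.par_self v).trans h₁, Function.iterate_succ_apply par k v ▸ h₂⟩

theorem isPath_walkUp (k : ℕ) (v : V) : (hR.walkUp k v).IsPath := by
  induction k generalizing v with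
  | zero => exact .nil
  | succ k ih =>
    rw [walkUp]
    split_ifs with h
    · rw [Walk.isPath_copy]; exact .nil
    · rw [Walk.isPath_copy, Walk.cons_isPath_iff]
      refine ⟨ih (par v), fun hv ↦ ?_⟩
      have := hR.dep_le_of_isAncestor (hR.isAncestor_of_mem_support_walkUp hv).1
      linarith [hR.dep_par_lt v h]

theorem sum_weight_walkUp (k : ℕ) (v : V) :
    ((hR.walkUp k v).edges.map w).sum = dep v - dep (par^[k] v) := by
  induction k generalizing v with
  | zero => simp [walkUp]
  | succ k ih =>
    rw [walkUp]
    split_ifs with h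
    · rw [Walk.edges_copy]; simp [h, Function.iterate_fixed hR.par_root]
    · simp [hR.weight_par v h, ih (par v), Function.iterate_succ_apply]

theorem treeWeight_eq_of_isLCA [Fintype V] (hG : G.IsTree) {u v m : V}
    (hm : IsLCA par dep u v m) : treeWeight G w {u, v} = dep u + dep v - 2 * dep m := by
  obtain ⟨k, hk⟩ := hm.1
  obtain ⟨l, hl⟩ := hm.2.1
  set p := (hR.walkUp k u).copy rfl hk
  set q := (hR.walkUp l v).copy rfl hl
  have mem_p : ∀ x ∈ p.support, IsAncestor par u x ∧ IsAncestor par x m := fun x hx ↦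
    hk ▸ hR.isAncestor_of_mem_support_walkUp (by simpa [p, Walk.support_copy] using hx)
  have mem_q : ∀ x ∈ q.support, IsAncestor par v x ∧ IsAncestor par x m := fun x hx ↦
    hl ▸ hR.isAncestor_of_mem_support_walkUp (by simpa [q, Walk.support_copy] using hx)
  have hp : p.IsPath := by simpa [p, Walk.isPath_copy] using hR.isPath_walkUp k u
  have hq : q.reverse.IsPath := by simpa [q, Walk.isPath_copy] using hR.isPath_walkUp l v
  have hpq : (p.append q.reverse).IsPath := by
    rw [Walk.isPath_def, Walk.support_append, List.nodup_append]
    refine ⟨hp.support_nodup, hq.support_nodup.sublist (List.tail_sublist _), ?_⟩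
    rintro x hxp _ hxq rfl
    have hx := mem_q x (by simpa using List.mem_of_mem_tail hxq)
    obtain rfl : x = m := hR.eq_of_isAncestor_of_dep_le hx.2 (hm.2.2 x (mem_p x hxp).1 hx.1)
    have hnodup := hq.support_nodup
    rw [← Walk.cons_tail_support, List.nodup_cons] at hnodup
    exact hnodup.1 hxq
  rw [treeWeight_pair_eq_sum_of_isPath hG w hpq, Walk.edges_append, Walk.edges_reverse,
    List.map_append, List.sum_append, List.map_reverse, List.sum_reverse]
  simp only [p, q, Walk.edges_copy, hR.sum_weight_walkUp, hk, hl]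
  ring

end IsWeightedParentMap

def depthWeight (dep : V → ℝ) : Sym2 V → ℝ :=
  Sym2.lift ⟨fun a b ↦ |dep a - dep b|, fun _ _ ↦ abs_sub_comm _ _⟩

namespace IsParentMap

variable {par : V → V} {dep : V → ℝ} {root : V} (hP : IsParentMap par dep root)
include hP

theorem exists_eq_of_mem_edgeSet_fromRel {e : Sym2 V}
    (he : e ∈ (fromRel fun a b ↦ par a = b).edgeSet) : ∃ v, v ≠ root ∧ e = s(v, par v) := by
  induction e using Sym2.ind with
  | _ a b =>
    rw [mem_edgeSet, fromRel_adj] at he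
    obtain ⟨hab, rfl | rfl⟩ := he
    · refine ⟨a, fun ha ↦ hab ?_, rfl⟩
      rw [ha, hP.par_root]
    · refine ⟨b, fun hb ↦ hab ?_, Sym2.eq_swap⟩
      rw [hb, hP.par_root]

theorem isWeightedParentMap_fromRel :
    IsWeightedParentMap (fromRel fun a b ↦ par a = b) (depthWeight dep) par dep root where
  toIsParentMap := hP
  adj_par v hv := by
    rw [fromRel_adj]
    exact ⟨fun h ↦ (hP.dep_par_lt v hv).ne (congrArg dep h.symm), .inl rfl⟩
  weight_par v hv := by
    rw [depthWeight, Sym2.lift_mk]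
    exact abs_of_pos (sub_pos.2 (hP.dep_par_lt v hv))

theorem depthWeight_pos {e : Sym2 V} (he : e ∈ (fromRel fun a b ↦ par a = b).edgeSet) :
    0 < depthWeight dep e := by
  obtain ⟨v, hv, rfl⟩ := hP.exists_eq_of_mem_edgeSet_fromRel he
  rw [hP.isWeightedParentMap_fromRel.weight_par v hv]
  linarith [hP.dep_par_lt v hv]

theorem isTree_fromRel [Finite V] : (fromRel fun a b ↦ par a = b).IsTree := by
  have hR := hP.isWeightedParentMap_fromRel
  rw [isTree_iff_connected_and_card]
  constructor
  · refine (connected_iff_exists_forall_reachable _).2 ⟨root, fun v ↦ ?_⟩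
    obtain ⟨k, hk⟩ := hP.isAncestor_root v
    exact ⟨((hR.walkUp k v).copy rfl hk).reverse⟩
  · let toEdge : {v // v ≠ root} → (fromRel fun a b ↦ par a = b).edgeSet :=
      fun v ↦ ⟨s(v.1, par v.1), hR.adj_par v.1 v.2⟩
    have bij : Function.Bijective toEdge := by
      refine ⟨fun u v huv ↦ ?_, fun e ↦ ?_⟩
      · rcases Sym2.eq_iff.1 (congrArg Subtype.val huv) with ⟨h, -⟩ | ⟨h₁, h₂⟩
        · exact Subtype.ext h
        · have := hP.dep_par_lt u.1 u.2
          have := hP.dep_par_lt v.1 v.2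
          rw [← h₁, h₂] at *
          linarith
      · obtain ⟨v, hv, he⟩ := hP.exists_eq_of_mem_edgeSet_fromRel e.2
        exact ⟨⟨v, hv⟩, Subtype.ext he.symm⟩
    rw [← Nat.card_congr (Equiv.ofBijective toEdge bij), ← Finite.card_option,
      Nat.card_congr (Equiv.optionSubtypeNe root)]

end IsParentMap

theorem SimpleGraph.IsTree.exists_isWeightedParentMap {G : SimpleGraph V} (hG : G.IsTree)
    {w : Sym2 V → ℝ} (hw : ∀ e ∈ G.edgeSet, 0 < w e) (r : V) :
    ∃ par dep, IsWeightedParentMap G w par dep r ∧ dep r = 0 := by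
  choose path hpath huniq using fun v ↦ hG.existsUnique_path v r
  have path_r : path r = .nil := (huniq r .nil .nil).symm
  let dep v := ((path v).edges.map w).sum
  have adj v (hv : v ≠ r) : G.Adj v (path v).snd := (path v).adj_snd (Walk.not_nil_of_ne hv)
  have dep_eq v (hv : v ≠ r) : dep v = w s(v, (path v).snd) + dep (path v).snd := by
    have htail : (path v).tail = path (path v).snd := huniq _ _ (hpath v).tail
    have : (path v).edges = s(v, (path v).snd) :: (path (path v).snd).edges := by
      conv_lhs => rw [← (path v).cons_tail_eq (Walk.not_nil_of_ne hv)]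
      rw [Walk.edges_cons, htail]
    simp only [dep, this, List.map_cons, List.sum_cons]
  refine ⟨fun v ↦ (path v).snd, dep, ⟨⟨by simp [path_r], fun v hv ↦ ?_⟩, adj, fun v hv ↦ ?_⟩,
    by simp [dep, path_r]⟩
  · linarith [dep_eq v hv, hw _ (G.mem_edgeSet.2 (adj v hv))]
  · linarith [dep_eq v hv]

theorem SimpleGraph.IsTree.maxAttainedTwice_treeWeight [Fintype V] {G : SimpleGraph V}
    (hG : G.IsTree) {w : Sym2 V → ℝ} (hw : ∀ e ∈ G.edgeSet, 0 < w e) (i j k h : V) :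
    MaxAttainedTwice (treeWeight G w {i, j} + treeWeight G w {k, h})
      (treeWeight G w {i, k} + treeWeight G w {j, h})
      (treeWeight G w {i, h} + treeWeight G w {k, j}) := by
  obtain ⟨par, dep, hR, hdep⟩ := hG.exists_isWeightedParentMap hw h
  have to_root a : treeWeight G w {a, h} = dep a := by
    have hlca : IsLCA par dep a h h :=
      ⟨hR.isAncestor_root a, .refl h, fun x _ hx ↦ hR.dep_le_of_isAncestor hx⟩
    rw [hR.treeWeight_eq_of_isLCA hG hlca, hdep]
    ring
  obtain ⟨mij, hij⟩ := hR.exists_isLCA i j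
  obtain ⟨mik, hik⟩ := hR.exists_isLCA i k
  obtain ⟨mjk, hjk⟩ := hR.exists_isLCA j k
  have h₁ := hik.min_dep_le hjk.symm hij
  have h₂ := hij.min_dep_le hjk hik
  have h₃ := hij.symm.min_dep_le hik hjk
  rw [maxAttainedTwice_iff, to_root, to_root, to_root, hR.treeWeight_eq_of_isLCA hG hij,
    hR.treeWeight_eq_of_isLCA hG hik, hR.treeWeight_eq_of_isLCA hG hjk.symm]
  simp only [le_max_iff, min_le_iff] at h₁ h₂ h₃ ⊢
  refine ⟨?_, ?_, ?_⟩
  · rcases h₁ with h₁ | h₁ <;> [left; right] <;> linarith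
  · rcases h₂ with h₂ | h₂ <;> [left; right] <;> linarith
  · rcases h₃ with h₃ | h₃ <;> [left; right] <;> linarith

section GromovProduct

variable {ι : Type}

def gromovProduct (d : ι → ι → ℝ) (z i j : ι) : ℝ := (d z i + d z j - d i j) / 2

theorem gromovProduct_min_le {d : ι → ι → ℝ} (hsymm : ∀ i j, d i j = d j i)
    (hself : ∀ i, d i i = 0) (htri : ∀ i j k, d i j ≤ d i k + d k j)
    (h4 : ∀ i j k h, i ≠ j → i ≠ k → i ≠ h → j ≠ k → j ≠ h → k ≠ h →
      MaxAttainedTwice (d i j + d k h) (d i k + d j h) (d i h + d k j))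
    (z i j k : ι) :
    min (gromovProduct d z i j) (gromovProduct d z j k) ≤ gromovProduct d z i k := by
  unfold gromovProduct
  by_cases hij : i = j
  · subst hij; exact min_le_right _ _
  by_cases hjk : j = k
  · subst hjk; exact min_le_left _ _
  by_cases hik : i = k
  · subst hik
    refine (min_le_left _ _).trans ?_
    linarith [htri z j i, hself i, hsymm i j]
  by_cases hzi : z = i
  · subst hzi
    refine (min_le_left _ _).trans ?_
    linarith [hself z]
  by_cases hzk : z = k
  · subst hzk
    refine (min_le_right _ _).trans ?_
    linarith [hself z, hsymm j z, hsymm i z]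
  by_cases hzj : z = j
  · subst hzj
    refine (min_le_left _ _).trans ?_
    linarith [hself z, hsymm i z, htri i k z]
  rcases le_max_iff.1 (maxAttainedTwice_iff.1 (h4 z i j k hzi hzj hzk hij hik hjk)).2.1 with h | h
  · exact (min_le_right _ _).trans (by linarith)
  · exact (min_le_left _ _).trans (by linarith [hsymm j i])

end GromovProduct

theorem le_self_of_min_le {ι : Type} {g : ι → ι → ℝ} (hsymm : ∀ i j, g i j = g j i)
    (hmin : ∀ i j k, min (g i j) (g j k) ≤ g i k) (i j : ι) : g i j ≤ g i i := by
  simpa [hsymm j i] using hmin i j i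

namespace Dendrogram

variable {ι : Type} [Fintype ι] {g : ι → ι → ℝ}

def levels (g : ι → ι → ℝ) : Finset ℝ := Finset.univ.image fun p : ι × ι ↦ g p.1 p.2

def level (g : ι → ι → ℝ) : Fin (levels g).card ↪o ℝ := (levels g).orderEmbOfFin rfl

theorem exists_level_eq (i j : ι) : ∃ k, level g k = g i j := by
  have : g i j ∈ Set.range (level g) := by
    rw [level, Finset.range_orderEmbOfFin]
    simp [levels]
  exact this

def down {m : ℕ} (k : Fin m) : Fin m := ⟨k - 1, by omega⟩

theorem val_down_iterate {m : ℕ} (a : ℕ) (k : Fin m) : (down^[a] k).val = k - a := by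
  induction a generalizing k with
  | zero => rfl
  | succ a ih => rw [Function.iterate_succ_apply, ih]; simp [down]; omega

variable (hsymm : ∀ i j, g i j = g j i) (hmin : ∀ i j k, min (g i j) (g j k) ≤ g i k)

/-- `(i, k)` is the point of branch `i` at height `level g k`; branches `i` and `j` are glued
up to height `g i j`. The points of branch `i` above its leaf, at height `g i i`, only form a
pendant path beyond that leaf. -/
def setoid : Setoid (ι × Fin (levels g).card) where
  r x y := x.2 = y.2 ∧ (x.1 = y.1 ∨ level g x.2 ≤ g x.1 y.1)
  iseqv := by
    refine ⟨fun x ↦ ⟨rfl, .inl rfl⟩, fun ⟨h, h'⟩ ↦ ⟨h.symm, ?_⟩,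
      fun ⟨h₁, h₁'⟩ ⟨h₂, h₂'⟩ ↦ ⟨h₁.trans h₂, ?_⟩⟩
    · rcases h' with h' | h'
      · exact .inl h'.symm
      · exact .inr (h ▸ hsymm _ _ ▸ h')
    · rcases h₁' with h₁' | h₁' <;> rcases h₂' with h₂' | h₂'
      · exact .inl (h₁'.trans h₂')
      · exact .inr (h₁' ▸ h₁ ▸ h₂')
      · exact .inr (h₂' ▸ h₁')
      · exact .inr ((le_min h₁' (h₁ ▸ h₂')).trans (hmin _ _ _))

abbrev Point := Quotient (setoid hsymm hmin)

def par : Point hsymm hmin → Point hsymm hmin :=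
  Quotient.map (fun x ↦ (x.1, down x.2)) fun _ _ ⟨h, h'⟩ ↦
    ⟨congrArg down h, h'.imp_right ((level g).monotone (by simp [down, Fin.le_def])).trans⟩

def dep : Point hsymm hmin → ℝ :=
  Quotient.lift (fun x ↦ level g x.2) fun _ _ h ↦ congrArg (level g) h.1

theorem par_iterate_mk (a : ℕ) (i : ι) (k : Fin (levels g).card) :
    (par hsymm hmin)^[a] ⟦(i, k)⟧ = ⟦(i, down^[a] k)⟧ := by
  induction a generalizing k with
  | zero => rfl
  | succ a ih => exact ih (down k)

theorem isAncestor_mk {i : ι} {k l : Fin (levels g).card} (hlk : l ≤ k) :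
    IsAncestor (par hsymm hmin) ⟦(i, k)⟧ ⟦(i, l)⟧ := by
  refine ⟨k - l, ?_⟩
  rw [par_iterate_mk]
  congr
  ext
  rw [val_down_iterate]
  omega

theorem isParentMap (i₀ : ι) (h₀ : 0 < (levels g).card) :
    IsParentMap (par hsymm hmin) (dep hsymm hmin) ⟦(i₀, ⟨0, h₀⟩)⟧ where
  par_root := rfl
  dep_par_lt c hc := by
    induction c using Quotient.ind with
    | _ x =>
      obtain ⟨i, k⟩ := x
      have hk : k.val ≠ 0 := by
        intro hk
        obtain rfl : k = ⟨0, h₀⟩ := Fin.ext hk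
        refine hc (Quotient.sound ⟨rfl, .inr ?_⟩)
        obtain ⟨l, hl⟩ := exists_level_eq (g := g) i i₀
        exact hl ▸ (level g).monotone (Fin.le_def.2 (Nat.zero_le l.val))
      exact (level g).strictMono (show down k < k by simp only [down, Fin.lt_def]; omega)

theorem isLCA_mk {i j : ι} (hij : i ≠ j) {kᵢ kⱼ k : Fin (levels g).card}
    (hkᵢ : level g kᵢ = g i i) (hkⱼ : level g kⱼ = g j j) (hk : level g k = g i j) :
    IsLCA (par hsymm hmin) (dep hsymm hmin) ⟦(i, kᵢ)⟧ ⟦(j, kⱼ)⟧ ⟦(i, k)⟧ := by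
  have hi : k ≤ kᵢ := (level g).le_iff_le.1 (hk ▸ hkᵢ ▸ le_self_of_min_le hsymm hmin i j)
  have hj : k ≤ kⱼ :=
    (level g).le_iff_le.1 (hk ▸ hkⱼ ▸ hsymm i j ▸ le_self_of_min_le hsymm hmin j i)
  have glue : (⟦(i, k)⟧ : Point hsymm hmin) = ⟦(j, k)⟧ := Quotient.sound ⟨rfl, .inr hk.le⟩
  refine ⟨isAncestor_mk hsymm hmin hi, glue ▸ isAncestor_mk hsymm hmin hj, ?_⟩
  rintro x ⟨a, rfl⟩ ⟨b, hb⟩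
  simp only [par_iterate_mk] at hb ⊢
  obtain ⟨-, hglue⟩ := Quotient.exact hb.symm
  exact (hglue.resolve_left hij).trans hk.ge

end Dendrogram

theorem exists_tree_of_min_le {ι : Type} [Fintype ι] [Nonempty ι] {g : ι → ι → ℝ}
    (hsymm : ∀ i j, g i j = g j i) (hmin : ∀ i j k, min (g i j) (g j k) ≤ g i k) :
    ∃ (V : Type) (_ : Fintype V) (G : SimpleGraph V) (w : Sym2 V → ℝ) (f : ι → V),
      G.IsTree ∧ (∀ e ∈ G.edgeSet, 0 < w e) ∧
      ∀ i j, i ≠ j → treeWeight G w {f i, f j} = g i i + g j j - 2 * g i j := by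
  obtain ⟨i₀⟩ := ‹Nonempty ι›
  obtain ⟨k₀, -⟩ := Dendrogram.exists_level_eq (g := g) i₀ i₀
  have hP := Dendrogram.isParentMap hsymm hmin i₀ k₀.pos
  choose leafLevel hleaf using fun i ↦ Dendrogram.exists_level_eq (g := g) i i
  refine ⟨Dendrogram.Point hsymm hmin, inferInstance, _, _, fun i ↦ ⟦(i, leafLevel i)⟧,
    hP.isTree_fromRel, fun e he ↦ hP.depthWeight_pos he, fun i j hij ↦ ?_⟩
  obtain ⟨k, hk⟩ := Dendrogram.exists_level_eq (g := g) i j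
  rw [hP.isWeightedParentMap_fromRel.treeWeight_eq_of_isLCA hP.isTree_fromRel
    (Dendrogram.isLCA_mk hsymm hmin hij (hleaf i) (hleaf j) hk)]
  simp only [Dendrogram.dep, Quotient.lift_mk, hleaf, hk]

section PairDist

variable {α : Type} [DecidableEq α] (D : Finset α → ℝ)

/-- `D {i, i} = D {i}` is not part of the data, so the diagonal is set to `0` by hand. -/
def pairDist (i j : α) : ℝ := if i = j then 0 else D {i, j}

variable {D}

theorem pairDist_of_ne {i j : α} (h : i ≠ j) : pairDist D i j = D {i, j} := if_neg h

theorem pairDist_self (i : α) : pairDist D i i = 0 := if_pos rfl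

theorem pairDist_comm (i j : α) : pairDist D i j = pairDist D j i := by
  by_cases h : i = j
  · rw [h]
  · rw [pairDist_of_ne h, pairDist_of_ne (Ne.symm h), Finset.pair_comm]

theorem pairDist_triangle (hpos : ∀ I : Finset α, I.card = 2 → 0 < D I)
    (htri : ∀ i j k : α, i ≠ j → j ≠ k → i ≠ k → D {i, j} ≤ D {i, k} + D {k, j}) (i j k : α) :
    pairDist D i j ≤ pairDist D i k + pairDist D k j := by
  have nonneg (a b : α) : 0 ≤ pairDist D a b := by
    unfold pairDist
    split_ifs with h
    exacts [le_rfl, (hpos _ (Finset.card_pair h)).le]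
  by_cases hij : i = j
  · rw [hij, pairDist_self]; linarith [nonneg j k, nonneg k j]
  by_cases hik : i = k
  · rw [hik, pairDist_self, zero_add]
  by_cases hkj : k = j
  · rw [hkj, pairDist_self, add_zero]
  rw [pairDist_of_ne hij, pairDist_of_ne hik, pairDist_of_ne hkj]
  exact htri i j k hij (Ne.symm hkj) hik

end PairDist

theorem IsPTreelike.maxAttainedTwice {n : ℕ} {D : Finset (Fin n) → ℝ} (hD : IsPTreelike n 2 D)
    {i j k h : Fin n} (hij : i ≠ j) (hik : i ≠ k) (hih : i ≠ h) (hjk : j ≠ k) (hjh : j ≠ h)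
    (hkh : k ≠ h) :
    MaxAttainedTwice (D {i, j} + D {k, h}) (D {i, k} + D {j, h}) (D {i, h} + D {k, j}) := by
  obtain ⟨V, _, G, w, f, hG, -, hw, hfD⟩ := hD
  have hpair a b (hab : a ≠ b) : treeWeight G w {f a, f b} = D {a, b} := by
    simpa using hfD {a, b} (Finset.card_pair hab)
  simpa only [hpair _ _ hij, hpair _ _ hkh, hpair _ _ hik, hpair _ _ hjh, hpair _ _ hih,
    hpair _ _ hjk.symm] using hG.maxAttainedTwice_treeWeight hw (f i) (f j) (f k) (f h)

theorem isPTreelike_of_maxAttainedTwice {n : ℕ} {D : Finset (Fin n) → ℝ}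
    (hpos : ∀ I : Finset (Fin n), I.card = 2 → 0 < D I)
    (htri : ∀ i j k : Fin n, i ≠ j → j ≠ k → i ≠ k → D {i, j} ≤ D {i, k} + D {k, j})
    (h4 : ∀ i j k h : Fin n, i ≠ j → i ≠ k → i ≠ h → j ≠ k → j ≠ h → k ≠ h →
      MaxAttainedTwice (D {i, j} + D {k, h}) (D {i, k} + D {j, h}) (D {i, h} + D {k, j})) :
    IsPTreelike n 2 D := by
  rcases isEmpty_or_nonempty (Fin n) with hn | hn
  · refine ⟨Unit, inferInstance, ⊥, fun _ ↦ 1, fun _ ↦ (), .of_subsingleton,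
      Function.injective_of_subsingleton _, fun _ _ ↦ one_pos, fun I hI ↦ ?_⟩
    simp [Finset.eq_empty_of_isEmpty I] at hI
  obtain ⟨z⟩ := id hn
  have h4' : ∀ i j k h : Fin n, i ≠ j → i ≠ k → i ≠ h → j ≠ k → j ≠ h → k ≠ h →
      MaxAttainedTwice (pairDist D i j + pairDist D k h) (pairDist D i k + pairDist D j h)
        (pairDist D i h + pairDist D k j) := fun i j k h hij hik hih hjk hjh hkh ↦ by
    rw [pairDist_of_ne hij, pairDist_of_ne hkh, pairDist_of_ne hik, pairDist_of_ne hjh,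
      pairDist_of_ne hih, pairDist_of_ne hjk.symm]
    exact h4 i j k h hij hik hih hjk hjh hkh
  obtain ⟨V, hV, G, w, f, hG, hw, hfg⟩ := exists_tree_of_min_le
    (fun i j ↦ by simp only [gromovProduct, pairDist_comm i j, add_comm])
    (gromovProduct_min_le pairDist_comm pairDist_self (pairDist_triangle hpos htri) h4' z)
  have hfD (i j : Fin n) (hij : i ≠ j) : treeWeight G w {f i, f j} = D {i, j} := by
    rw [hfg i j hij, ← pairDist_of_ne (D := D) hij]
    simp only [gromovProduct, pairDist_self]
    ring
  refine ⟨V, hV, G, w, f, hG, fun i j hfij ↦ ?_, hw, fun I hI ↦ ?_⟩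
  · by_contra hij
    have := hfD i j hij
    rw [hfij, treeWeight_pair_self hG] at this
    exact (hpos _ (Finset.card_pair hij)).ne this
  · obtain ⟨i, j, hij, rfl⟩ := Finset.card_eq_two.1 hI
    simpa using hfD i j hij

/-- **Theorem (Buneman; Simões-Pereira; Zaretskii).** Let `{D_{i,j}}` be a family of
positive real numbers indexed by the 2-subsets of `[n]` satisfying the triangle
inequalities. It is p-treelike if and only if for all distinct `i,j,k,h ∈ [n]` the
maximum of `{D_{i,j}+D_{k,h}, D_{i,k}+D_{j,h}, D_{i,h}+D_{k,j}}` is attained at least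
twice. -/
theorem buneman_four_point (n : ℕ) (D : Finset (Fin n) → ℝ)
    (hpos : ∀ I : Finset (Fin n), I.card = 2 → 0 < D I)
    (htri : ∀ i j k : Fin n, i ≠ j → j ≠ k → i ≠ k →
      D {i, j} ≤ D {i, k} + D {k, j}) :
    IsPTreelike n 2 D ↔
      ∀ i j k h : Fin n, i ≠ j → i ≠ k → i ≠ h → j ≠ k → j ≠ h → k ≠ h →
        ((D {i, j} + D {k, h} = D {i, k} + D {j, h} ∧
            D {i, h} + D {k, j} ≤ D {i, j} + D {k, h}) ∨
         (D {i, j} + D {k, h} = D {i, h} + D {k, j} ∧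
            D {i, k} + D {j, h} ≤ D {i, j} + D {k, h}) ∨
         (D {i, k} + D {j, h} = D {i, h} + D {k, j} ∧
            D {i, j} + D {k, h} ≤ D {i, k} + D {j, h})) :=
  ⟨fun hD _ _ _ _ ↦ hD.maxAttainedTwice, isPTreelike_of_maxAttainedTwice hpos htri⟩
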